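/- arXiv:1807.01357 — 4 statements merged into one kernel-verified Lean document; each statement's English description precedes it below -/
import Mathlib

section
/- Let S : [0,T] → ℝ be C^1 with S(0) = S_in ≥ 0. Suppose there exist constants 0 < c_st0 < c_max and 0 < κ < 1 such that whenever S'(t) > 0 one has S'(t) ≤ (N(t)/ε)(κ c_max - (c_st0 + c_max S(t))/(1 + S(t))) with N(t) > 0 and ε > 0. Then S(t) ≤ max{S_in, (κ c_max - c_st0)/(c_max (1-κ))} for all t ∈ [0,T]. -/
theorem stmt6 (T c_st0 c_max κ ε S_in : ℝ) (hT : 0 < T)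
    (h1 : 0 < c_st0) (h2 : c_st0 < c_max) (hκ0 : 0 < κ) (hκ1 : κ < 1) (hε : 0 < ε)
    (N S S' : ℝ → ℝ) (hNc : ContinuousOn N (Set.Icc 0 T))
    (hNpos : ∀ t ∈ Set.Icc 0 T, 0 < N t)
    (hS'c : ContinuousOn S' (Set.Icc 0 T))
    (hderiv : ∀ t ∈ Set.Icc 0 T, HasDerivWithinAt S (S' t) (Set.Icc 0 T) t)
    (hS0 : S 0 = S_in) (hSin : 0 ≤ S_in) (hSnn : ∀ t ∈ Set.Icc 0 T, 0 ≤ S t)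
    (hineq : ∀ t ∈ Set.Icc 0 T, 0 < S' t →
      S' t ≤ (N t / ε) * (κ * c_max - (c_st0 + c_max * S t) / (1 + S t))) :
    ∀ t ∈ Set.Icc 0 T, S t ≤ max S_in ((κ * c_max - c_st0) / (c_max * (1 - κ))) := by
  set M := max S_in ((κ * c_max - c_st0) / (c_max * (1 - κ))) with hM
  have hBpos : 0 < c_max * (1 - κ) := by nlinarith
  have hSc : ContinuousOn S (Set.Icc 0 T) := fun x hx => (hderiv x hx).continuousWithinAt
  -- key: derivative is nonpositive wherever S x > M
  have hkey : ∀ x ∈ Set.Icc 0 T, M < S x → S' x ≤ 0 := by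
    intro x hx hMx
    by_contra hpos
    push_neg at hpos
    have h := hineq x hx hpos
    have h1S : (0:ℝ) < 1 + S x := by have := hSnn x hx; linarith
    have hB : (κ * c_max - c_st0) / (c_max * (1 - κ)) < S x :=
      lt_of_le_of_lt (le_max_right _ _) hMx
    rw [div_lt_iff₀ hBpos] at hB
    have hbr : κ * c_max - (c_st0 + c_max * S x) / (1 + S x) < 0 := by
      rw [sub_neg, lt_div_iff₀ h1S]
      nlinarith
    have hNε : 0 < N x / ε := div_pos (hNpos x hx) hε
    nlinarith [mul_neg_of_pos_of_neg hNε hbr]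
  intro t ht
  by_contra hgt
  push_neg at hgt
  -- last time before t where S ≤ M
  set A : Set ℝ := Set.Icc 0 t ∩ S ⁻¹' Set.Iic M with hA
  have hsub : Set.Icc 0 t ⊆ Set.Icc 0 T := Set.Icc_subset_Icc le_rfl ht.2
  have hAclosed : IsClosed A :=
    (hSc.mono hsub).preimage_isClosed_of_isClosed isClosed_Icc isClosed_Iic
  have hAcomp : IsCompact A :=
    isCompact_Icc.of_isClosed_subset hAclosed Set.inter_subset_left
  have h0A : (0:ℝ) ∈ A := by
    refine ⟨⟨le_rfl, ht.1⟩, ?_⟩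
    simp only [Set.mem_preimage, Set.mem_Iic, hS0]
    exact le_max_left _ _
  obtain ⟨c, hcA, hcmax⟩ := hAcomp.exists_isGreatest ⟨0, h0A⟩
  have hcIcc : c ∈ Set.Icc 0 t := hcA.1
  have hcM : S c ≤ M := hcA.2
  have hct : c < t := lt_of_le_of_ne hcIcc.2 (by rintro rfl; exact absurd hcM (not_le.mpr hgt))
  -- on (c, t], S > M
  have hgtM : ∀ x ∈ Set.Ioc c t, M < S x := by
    intro x hx
    by_contra hle
    push_neg at hle
    have : x ∈ A := ⟨⟨le_trans hcIcc.1 hx.1.le, hx.2⟩, hle⟩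
    exact absurd (hcmax this) (not_le.mpr hx.1)
  -- S is antitone on [c, t]
  have hanti : AntitoneOn S (Set.Icc c t) := by
    apply antitoneOn_of_deriv_nonpos (convex_Icc c t)
      (hSc.mono (Set.Icc_subset_Icc hcIcc.1 ht.2))
    · intro x hx
      rw [interior_Icc] at hx
      have hxT : x ∈ Set.Icc 0 T := ⟨le_of_lt (lt_of_le_of_lt hcIcc.1 hx.1),
        le_of_lt (lt_of_lt_of_le hx.2 ht.2)⟩
      have hda : HasDerivAt S (S' x) x :=
        (hderiv x hxT).hasDerivAt (Icc_mem_nhds (lt_of_le_of_lt hcIcc.1 hx.1)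
          (lt_of_lt_of_le hx.2 ht.2))
      exact hda.differentiableAt.differentiableWithinAt
    · intro x hx
      rw [interior_Icc] at hx
      have hxT : x ∈ Set.Icc 0 T := ⟨le_of_lt (lt_of_le_of_lt hcIcc.1 hx.1),
        le_of_lt (lt_of_lt_of_le hx.2 ht.2)⟩
      have hda : HasDerivAt S (S' x) x :=
        (hderiv x hxT).hasDerivAt (Icc_mem_nhds (lt_of_le_of_lt hcIcc.1 hx.1)
          (lt_of_lt_of_le hx.2 ht.2))
      rw [hda.deriv]
      exact hkey x hxT (hgtM x ⟨hx.1, hx.2.le⟩)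
  have : S t ≤ S c := hanti ⟨le_rfl, hct.le⟩ ⟨hct.le, le_rfl⟩ hct.le
  linarith [hcM, hgt]
end

section
/- Let γ = (F_max/F_min)(c_min/c_max) < 1 with F_min, F_max, c_min, c_max > 0 and let c_st0 ∈ (0, c_max). If S : [0,T] → ℝ is C^1, S(0) = S_in ≥ 0, and whenever S'(t) > 0 one has S'(t) ≤ (F_min c_max)/(ε c_min) * (γ - (c_st0/c_max + S(t))/(1 + S(t))), then S(t) ≤ max{S_in, (γ c_max - c_st0)/(c_max(1-γ))} for all t ∈ [0,T]. -/
/-!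
Let `B = (γ c_max - c_st0) / (c_max (1 - γ))`, the point where `s ↦ γ - (c_st0 / c_max + s) / (1 + s)`
changes sign on `s > -1`. Wherever `S t ≥ B` the differential inequality therefore forbids
`S' t > 0`, so `S` cannot rise above `M = max S_in B`: by strict fencing it stays below every
barrier `M + δ t` with `δ > 0`.
-/

open Set

theorem image_le_of_deriv_right_nonpos_of_le {f f' : ℝ → ℝ} {a b M : ℝ}
    (hf : ContinuousOn f (Icc a b))
    (hf' : ∀ x ∈ Ico a b, HasDerivWithinAt f (f' x) (Ici x) x) (ha : f a ≤ M)
    (hM : ∀ x ∈ Ico a b, M ≤ f x → f' x ≤ 0) : ∀ ⦃x⦄, x ∈ Icc a b → f x ≤ M := by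
  intro x hx
  have hxa : 0 ≤ x - a := sub_nonneg.2 hx.1
  refine le_of_forall_pos_le_add fun ε hε => ?_
  set δ := ε / (x - a + 1)
  have hδ : 0 < δ := by positivity
  have hfence : f x ≤ M + δ * (x - a) := by
    refine image_le_of_deriv_right_lt_deriv_boundary hf hf' (B' := fun _ => δ) (by simpa using ha)
      (fun y => ((hasDerivAt_id' y).sub_const a).const_mul δ |>.const_add M |>.congr_deriv
        (by ring)) (fun y hy hfy => ?_) hx
    have hMy : M ≤ f y := by rw [hfy]; nlinarith [mul_nonneg hδ.le (sub_nonneg.2 hy.1)]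
    exact (hM y hy hMy).trans_lt hδ
  calc f x ≤ M + δ * (x - a) := hfence
    _ ≤ M + δ * (x - a + 1) := by nlinarith
    _ = M + ε := by rw [div_mul_cancel₀ _ (by positivity)]

theorem le_div_one_add_of_div_le {γ c d s : ℝ} (hc : 0 < c) (hγ : γ < 1) (hs : 0 < 1 + s)
    (hB : (γ * c - d) / (c * (1 - γ)) ≤ s) : γ ≤ (d / c + s) / (1 + s) := by
  rw [div_le_iff₀ (by nlinarith)] at hB
  rw [le_div_iff₀ hs, div_add' _ _ _ hc.ne', le_div_iff₀ hc]
  nlinarith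

theorem stmt7_general (T F_min c_min c_max c_st0 ε S_in γ : ℝ)
    (hFmin : 0 < F_min) (hcmin : 0 < c_min) (hcmax : c_min < c_max)
    (hε : 0 < ε) (hγ1 : γ < 1)
    (S S' : ℝ → ℝ)
    (hderiv : ∀ t ∈ Set.Icc 0 T, HasDerivWithinAt S (S' t) (Set.Icc 0 T) t)
    (hS0 : S 0 = S_in) (hSnn : ∀ t ∈ Set.Icc 0 T, 0 ≤ S t)
    (hineq : ∀ t ∈ Set.Icc 0 T, 0 < S' t →
      S' t ≤ (F_min * c_max) / (ε * c_min) * (γ - (c_st0 / c_max + S t) / (1 + S t))) :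
    ∀ t ∈ Set.Icc 0 T, S t ≤ max S_in ((γ * c_max - c_st0) / (c_max * (1 - γ))) := by
  have hcmax0 : 0 < c_max := hcmin.trans hcmax
  have hrate : 0 ≤ (F_min * c_max) / (ε * c_min) := by positivity
  refine image_le_of_deriv_right_nonpos_of_le (f' := S')
    (fun t ht => (hderiv t ht).continuousWithinAt)
    (fun t ht => (hderiv t (Ico_subset_Icc_self ht)).mono_of_mem_nhdsWithin
      (Icc_mem_nhdsGE_of_mem ht))
    (hS0.trans_le (le_max_left _ _)) fun t ht hMt => ?_
  have ht' := Ico_subset_Icc_self ht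
  have hγS : γ ≤ (c_st0 / c_max + S t) / (1 + S t) :=
    le_div_one_add_of_div_le hcmax0 hγ1 (by linarith [hSnn t ht']) ((le_max_right _ _).trans hMt)
  by_contra! hpos
  nlinarith [hineq t ht' hpos, mul_nonpos_of_nonneg_of_nonpos hrate (sub_nonpos.2 hγS)]

theorem stmt7 (T F_min F_max c_min c_max c_st0 ε S_in γ : ℝ) (hT : 0 < T)
    (hFmin : 0 < F_min) (hFmax : F_min ≤ F_max) (hcmin : 0 < c_min) (hcmax : c_min < c_max)
    (hε : 0 < ε) (hcst0 : c_st0 ∈ Set.Ioo 0 c_max)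
    (hγ : γ = (F_max / F_min) * (c_min / c_max)) (hγ1 : γ < 1)
    (S S' : ℝ → ℝ) (hS'c : ContinuousOn S' (Set.Icc 0 T))
    (hderiv : ∀ t ∈ Set.Icc 0 T, HasDerivWithinAt S (S' t) (Set.Icc 0 T) t)
    (hS0 : S 0 = S_in) (hSin : 0 ≤ S_in) (hSnn : ∀ t ∈ Set.Icc 0 T, 0 ≤ S t)
    (hineq : ∀ t ∈ Set.Icc 0 T, 0 < S' t →
      S' t ≤ (F_min * c_max) / (ε * c_min) * (γ - (c_st0 / c_max + S t) / (1 + S t))) :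
    ∀ t ∈ Set.Icc 0 T, S t ≤ max S_in ((γ * c_max - c_st0) / (c_max * (1 - γ))) :=
  stmt7_general T F_min c_min c_max c_st0 ε S_in γ hFmin hcmin hcmax hε hγ1 S S' hderiv hS0 hSnn
    hineq
end

section
/- Let S, p : [0,T] → ℝ be absolutely continuous with S'(t)(S(t) - p(t)) ≤ 0 for a.e. t. Then for all t ∈ [0,T], |S(t) - p(t)| + ∫_0^t |S'(τ)| · 1_{S(τ) ≠ p(τ)} dτ ≤ |S(0) - p(0)| + ∫_0^t |p'(τ)| dτ. -/
/-!
Write `u = S - p`. Then `|u|` is absolutely continuous, so `|u(t)| - |u(0)| = ∫₀ᵗ (d/dτ)|u|`.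
At almost every `τ` where `u(τ) ≠ 0`, the sign condition says `S'` points towards `p`, so
`(d/dτ)|u| = sign(u)(S' - p') = -|S'| - sign(u) p' ≤ -|S'| + |p'|`; where `u(τ) = 0`, `|u|` has a
minimum and its derivative vanishes. Integrating gives the estimate.
-/

open MeasureTheory Set Filter

theorem LipschitzWith.comp_absolutelyContinuousOnInterval {X Y : Type*} [PseudoMetricSpace X]
    [PseudoMetricSpace Y] {g : X → Y} {K : NNReal} {f : ℝ → X} {a b : ℝ}
    (hg : LipschitzWith K g) (hf : AbsolutelyContinuousOnInterval f a b) :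
    AbsolutelyContinuousOnInterval (fun x ↦ g (f x)) a b := by
  unfold AbsolutelyContinuousOnInterval at hf ⊢
  refine squeeze_zero (fun _ ↦ Finset.sum_nonneg fun _ _ ↦ dist_nonneg) (fun E ↦ ?_)
    (by simpa using hf.const_mul (K : ℝ))
  rw [Finset.mul_sum]
  exact Finset.sum_le_sum fun i _ ↦ hg.dist_le_mul _ _

theorem lipschitzWith_one_abs : LipschitzWith 1 (fun x : ℝ ↦ |x|) :=
  LipschitzWith.of_dist_le_mul fun x y ↦ by
    simpa [Real.dist_eq] using abs_abs_sub_abs_le_abs_sub x y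

theorem deriv_abs_sub_add_abs_deriv_indicator_le {S p : ℝ → ℝ} {x : ℝ}
    (hS : DifferentiableAt ℝ S x) (hp : DifferentiableAt ℝ p x)
    (h : deriv S x * (S x - p x) ≤ 0) :
    deriv (fun y ↦ |S y - p y|) x + |deriv S x| * {y | S y ≠ p y}.indicator (fun _ ↦ 1) x
      ≤ |deriv p x| := by
  have hu : HasDerivAt (fun y ↦ S y - p y) (deriv S x - deriv p x) x :=
    hS.hasDerivAt.sub hp.hasDerivAt
  rcases lt_trichotomy (S x - p x) 0 with hneg | hzero | hpos
  · have hS' : 0 ≤ deriv S x := nonneg_of_mul_nonpos_left h hneg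
    have hd : HasDerivAt (fun y ↦ |S y - p y|) (-1 * (deriv S x - deriv p x)) x :=
      (hasDerivAt_abs_neg hneg).comp (h := fun y ↦ S y - p y) x hu
    rw [hd.deriv, indicator_of_mem (by simp; linarith), abs_of_nonneg hS']
    linarith [le_abs_self (deriv p x)]
  · have hmin : IsLocalMin (fun y ↦ |S y - p y|) x :=
      Eventually.of_forall fun y ↦ by simp only [hzero, abs_zero]; exact abs_nonneg _
    rw [hmin.deriv_eq_zero, indicator_of_notMem (by simp; linarith)]
    simp
  · have hS' : deriv S x ≤ 0 := nonpos_of_mul_nonpos_left h hpos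
    have hd : HasDerivAt (fun y ↦ |S y - p y|) (1 * (deriv S x - deriv p x)) x :=
      (hasDerivAt_abs_pos hpos).comp (h := fun y ↦ S y - p y) x hu
    rw [hd.deriv, indicator_of_mem (by simp; linarith), abs_of_nonpos hS']
    linarith [neg_abs_le (deriv p x)]

theorem AbsolutelyContinuousOnInterval.abs_sub_add_integral_le {S p : ℝ → ℝ} {a b : ℝ}
    (hab : a ≤ b) (hS : AbsolutelyContinuousOnInterval S a b)
    (hp : AbsolutelyContinuousOnInterval p a b)
    (h : ∀ᵐ τ ∂volume.restrict (Ioo a b), deriv S τ * (S τ - p τ) ≤ 0) :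
    |S b - p b| + ∫ τ in a..b, |deriv S τ| * {τ | S τ ≠ p τ}.indicator (fun _ ↦ 1) τ
      ≤ |S a - p a| + ∫ τ in a..b, |deriv p τ| := by
  have hu : AbsolutelyContinuousOnInterval (fun x ↦ S x - p x) a b := hS.fun_sub hp
  have habs : AbsolutelyContinuousOnInterval (fun x ↦ |S x - p x|) a b :=
    lipschitzWith_one_abs.comp_absolutelyContinuousOnInterval hu
  have hind : AEStronglyMeasurable (fun τ ↦ {τ | S τ ≠ p τ}.indicator (fun _ ↦ (1 : ℝ)) τ)
      (volume.restrict (uIoc a b)) := by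
    have hmeas : Measurable (({0}ᶜ : Set ℝ).indicator fun _ ↦ (1 : ℝ)) :=
      measurable_const.indicator (measurableSet_singleton 0).compl
    have hu_meas : AEMeasurable (fun x ↦ S x - p x) (volume.restrict (uIoc a b)) :=
      ((hu.continuousOn.aestronglyMeasurable measurableSet_uIcc).mono_set
        uIoc_subset_uIcc).aemeasurable
    refine (hmeas.comp_aemeasurable hu_meas).aestronglyMeasurable.congr
      (.of_forall fun τ ↦ ?_)
    simp [indicator_apply, sub_eq_zero]
  have hdS := hS.intervalIntegrable_deriv.abs
  have hψ : IntervalIntegrable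
      (fun τ ↦ |deriv S τ| * {τ | S τ ≠ p τ}.indicator (fun _ ↦ 1) τ) volume a b := by
    refine hdS.mono_fun (hdS.def'.aestronglyMeasurable.mul hind) (.of_forall fun τ ↦ ?_)
    by_cases hτ : S τ = p τ <;> simp [hτ]
  have hkey : ∀ᵐ τ ∂volume.restrict (Icc a b), deriv (fun y ↦ |S y - p y|) τ
      + |deriv S τ| * {τ | S τ ≠ p τ}.indicator (fun _ ↦ 1) τ ≤ |deriv p τ| := by
    rw [Measure.restrict_congr_set Ioo_ae_eq_Icc.symm]
    filter_upwards [h, ae_restrict_of_ae hS.ae_differentiableAt,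
      ae_restrict_of_ae hp.ae_differentiableAt, ae_restrict_mem measurableSet_Ioo]
      with τ hτ hSτ hpτ hmem
    have hmem' : τ ∈ uIcc a b := Icc_subset_uIcc (Ioo_subset_Icc_self hmem)
    exact deriv_abs_sub_add_abs_deriv_indicator_le (hSτ hmem') (hpτ hmem') hτ
  have := intervalIntegral.integral_mono_ae_restrict hab
    (habs.intervalIntegrable_deriv.add hψ) hp.intervalIntegrable_deriv.abs hkey
  rw [intervalIntegral.integral_add habs.intervalIntegrable_deriv hψ,
    habs.integral_deriv_eq_sub] at this
  linarith

theorem stmt8_general (T : ℝ) (K₁ K₂ : NNReal) (S p : ℝ → ℝ)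
    (hS : LipschitzOnWith K₁ S (Set.Icc 0 T)) (hp : LipschitzOnWith K₂ p (Set.Icc 0 T))
    (h : ∀ᵐ t ∂(volume.restrict (Set.Ioo (0:ℝ) T)), deriv S t * (S t - p t) ≤ 0) :
    ∀ t ∈ Set.Icc 0 T,
      |S t - p t| +
        ∫ τ in (0:ℝ)..t, |deriv S τ| * Set.indicator {τ : ℝ | S τ ≠ p τ} (fun _ => (1:ℝ)) τ
      ≤ |S 0 - p 0| + ∫ τ in (0:ℝ)..t, |deriv p τ| := by
  intro t ht
  have hsub : uIcc 0 t ⊆ Icc 0 T := by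
    rw [uIcc_of_le ht.1]
    exact Icc_subset_Icc_right ht.2
  exact AbsolutelyContinuousOnInterval.abs_sub_add_integral_le ht.1
    (hS.mono hsub).absolutelyContinuousOnInterval (hp.mono hsub).absolutelyContinuousOnInterval
    (ae_restrict_of_ae_restrict_of_subset (Ioo_subset_Ioo_right ht.2) h)

theorem stmt8 (T : ℝ) (hT : 0 < T) (K₁ K₂ : NNReal) (S p : ℝ → ℝ)
    (hS : LipschitzOnWith K₁ S (Set.Icc 0 T)) (hp : LipschitzOnWith K₂ p (Set.Icc 0 T))
    (h : ∀ᵐ t ∂(volume.restrict (Set.Ioo (0:ℝ) T)), deriv S t * (S t - p t) ≤ 0) :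
    ∀ t ∈ Set.Icc 0 T,
      |S t - p t| +
        ∫ τ in (0:ℝ)..t, |deriv S τ| * Set.indicator {τ : ℝ | S τ ≠ p τ} (fun _ => (1:ℝ)) τ
      ≤ |S 0 - p 0| + ∫ τ in (0:ℝ)..t, |deriv p τ| :=
  stmt8_general T K₁ K₂ S p hS hp h
end

section
/- Let S, p : [0,T] → ℝ be Lipschitz with S'(t)(S(t) - p(t)) ≤ 0 a.e., |S - p| ≤ M on [0,T] and ∫_0^T |p'| ≤ M'. Then ∫_0^T |S'(τ)(S(τ) - p(τ))| dτ ≤ (1/2)(S(0)-p(0))^2 - (1/2)(S(T)-p(T))^2 + M M', so ‖S'(S-p)‖_{L^1(0,T)} is bounded in terms of M, M' and the initial value. -/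
/-!
Put `u = S - p`. Wherever `S` and `p` are differentiable, `S' u = u' u + p' u = (u²)'/2 + p' u`,
and Lipschitz functions are absolutely continuous, so the fundamental theorem of calculus gives
`∫ S' u = (u(T)² - u(0)²)/2 + ∫ p' u`. Since `S' u ≤ 0`, the left side is `-∫ |S' u|`, and
`|∫ p' u| ≤ M ∫ |p'| ≤ M M'`.
-/

open MeasureTheory Set

namespace AbsolutelyContinuousOnInterval

variable {f g : ℝ → ℝ} {a b : ℝ}

theorem integral_deriv_mul_self (hf : AbsolutelyContinuousOnInterval f a b) :
    ∫ x in a..b, deriv f x * f x = (f b ^ 2 - f a ^ 2) / 2 := by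
  have h := hf.integral_deriv_mul_eq_sub hf
  simp_rw [mul_comm (f _) (deriv f _), ← two_mul, intervalIntegral.integral_const_mul] at h
  linarith

theorem integral_deriv_mul_sub (hf : AbsolutelyContinuousOnInterval f a b)
    (hg : AbsolutelyContinuousOnInterval g a b) :
    ∫ x in a..b, deriv f x * (f x - g x)
      = ((f b - g b) ^ 2 - (f a - g a) ^ 2) / 2 + ∫ x in a..b, deriv g x * (f x - g x) := by
  have hfg := hf.sub hg
  have hderiv : ∀ᵐ x, x ∈ uIoc a b →
      deriv f x * (f x - g x) = deriv (f - g) x * (f - g) x + deriv g x * (f - g) x := by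
    filter_upwards [hf.ae_differentiableAt, hg.ae_differentiableAt] with x hfx hgx hx
    have hx' : x ∈ uIcc a b := uIoc_subset_uIcc hx
    rw [deriv_sub (hfx hx') (hgx hx'), Pi.sub_apply]
    ring
  rw [intervalIntegral.integral_congr_ae hderiv, intervalIntegral.integral_add
    (hfg.intervalIntegrable_deriv.mul_continuousOn hfg.continuousOn)
    (hg.intervalIntegrable_deriv.mul_continuousOn hfg.continuousOn),
    hfg.integral_deriv_mul_self]
  rfl

end AbsolutelyContinuousOnInterval

namespace intervalIntegral

variable {f g : ℝ → ℝ} {a b : ℝ}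

theorem integral_abs_of_ae_nonpos (hab : a ≤ b)
    (hf : ∀ᵐ x ∂(volume.restrict (Ioo a b)), f x ≤ 0) :
    ∫ x in a..b, |f x| = -∫ x in a..b, f x := by
  rw [Measure.restrict_congr_set Ioo_ae_eq_Ioc] at hf
  rw [integral_of_le hab, integral_of_le hab, ← MeasureTheory.integral_neg]
  exact MeasureTheory.integral_congr_ae (hf.mono fun x hx => abs_of_nonpos hx)

theorem abs_integral_mul_le_of_abs_le {M : ℝ} (hab : a ≤ b)
    (hg : IntervalIntegrable g volume a b) (hf : ∀ x ∈ Icc a b, |f x| ≤ M) :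
    |∫ x in a..b, g x * f x| ≤ M * ∫ x in a..b, |g x| := by
  rw [← integral_const_mul M fun x => |g x|]
  refine norm_integral_le_of_norm_le (f := fun x => g x * f x) hab
    (ae_of_all _ fun x hx => ?_) (hg.abs.const_mul M)
  rw [Real.norm_eq_abs, abs_mul, mul_comm M]
  exact mul_le_mul_of_nonneg_left (hf x (Ioc_subset_Icc_self hx)) (abs_nonneg _)

end intervalIntegral

theorem stmt9 (T M M' : ℝ) (hT : 0 < T) (K₁ K₂ : NNReal) (S p : ℝ → ℝ)
    (hS : LipschitzOnWith K₁ S (Set.Icc 0 T)) (hp : LipschitzOnWith K₂ p (Set.Icc 0 T))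
    (h : ∀ᵐ t ∂(volume.restrict (Set.Ioo (0:ℝ) T)), deriv S t * (S t - p t) ≤ 0)
    (hM : ∀ t ∈ Set.Icc 0 T, |S t - p t| ≤ M)
    (hM' : (∫ τ in (0:ℝ)..T, |deriv p τ|) ≤ M') :
    (∫ τ in (0:ℝ)..T, |deriv S τ * (S τ - p τ)|)
      ≤ (1/2) * (S 0 - p 0)^2 - (1/2) * (S T - p T)^2 + M * M' := by
  rw [← uIcc_of_le hT.le] at hS hp
  have hSac := hS.absolutelyContinuousOnInterval
  have hpac := hp.absolutelyContinuousOnInterval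
  have hM₀ : 0 ≤ M := (abs_nonneg _).trans (hM 0 (left_mem_Icc.2 hT.le))
  obtain ⟨hcross, -⟩ := abs_le.1 <|
    intervalIntegral.abs_integral_mul_le_of_abs_le hT.le hpac.intervalIntegrable_deriv hM
  have hMM' := mul_le_mul_of_nonneg_left hM' hM₀
  rw [intervalIntegral.integral_abs_of_ae_nonpos hT.le h, hSac.integral_deriv_mul_sub hpac]
  linarith
end
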